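/- (Eckart–Young–Mirsky, Frobenius norm) Let G ∈ ℝ^{n×m} have SVD G = U Σ Vᵀ with singular values σ_1 ≥ ... ≥ σ_q (q = min(n,m)). For any r, the truncation G_r = U_r Σ_r V_rᵀ (keeping the top r singular values) satisfies ‖G − G_r‖_F ≤ ‖G − B‖_F for every matrix B of rank at most r, and ‖G − G_r‖_F² = Σ_{j>r} σ_j². -/

import Mathlib

open Matrix

/-!
Conjugation by the orthogonal matrices `U` and `V` preserves both the Frobenius norm and the
rank, so `G` may be replaced by the rectangular diagonal matrix `S`. Let `C` have rank at most
`r`, with column space `W`, and put `w k = ‖P_W e_k‖²`. Projecting the `k`-th column of `S`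
onto `W` shows that the `k`-th column of `S - C` has squared norm at least `σ_k² (1 - w k)`,
while Bessel's inequality gives `0 ≤ w k ≤ 1` and `∑ w k ≤ dim W ≤ r`. As `σ` is decreasing,
`∑ σ_k² (1 - w k)` is smallest when the weight `w` sits on the first `r` indices, where it
equals `∑_{k ≥ r} σ_k²`; the truncation `U Sr Vᵀ` attains this value.
-/

open Finset
open scoped RealInnerProductSpace

namespace Submodule

variable {E : Type*} [NormedAddCommGroup E] [InnerProductSpace ℝ E]

theorem norm_sq_sub_norm_starProjection_sq_le (K : Submodule ℝ E) [K.HasOrthogonalProjection]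
    (y : E) {x : E} (hx : x ∈ K) :
    ‖y‖ ^ 2 - ‖K.starProjection y‖ ^ 2 ≤ ‖y - x‖ ^ 2 := by
  set p := K.starProjection y
  have pythagoras (z : E) (hz : z ∈ K) : ‖y - z‖ ^ 2 = ‖y - p‖ ^ 2 + ‖p - z‖ ^ 2 := by
    rw [← sub_add_sub_cancel y p z, norm_add_sq_real,
      K.starProjection_inner_eq_zero y _ (K.sub_mem (K.starProjection_apply_mem y) hz)]
    ring
  have h0 := pythagoras 0 K.zero_mem
  rw [sub_zero, sub_zero] at h0
  nlinarith [pythagoras x hx, sq_nonneg ‖p - x‖]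

theorem sum_norm_starProjection_sq_le_finrank (K : Submodule ℝ E) [FiniteDimensional ℝ K]
    {ι : Type*} [Fintype ι] {v : ι → E} (hv : Orthonormal ℝ v) :
    ∑ i, ‖K.starProjection (v i)‖ ^ 2 ≤ Module.finrank ℝ K := by
  let b := stdOrthonormalBasis ℝ K
  have parseval (x : E) : ‖K.starProjection x‖ ^ 2 = ∑ l, ⟪(b l : E), x⟫ ^ 2 := by
    rw [starProjection_apply, norm_coe, ← b.sum_sq_norm_inner_right]
    simp
  have bessel (l) : ∑ i, ⟪v i, (b l : E)⟫ ^ 2 ≤ 1 := by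
    simpa [norm_coe, b.orthonormal.1 l] using hv.sum_inner_products_le (b l : E) (s := univ)
  calc ∑ i, ‖K.starProjection (v i)‖ ^ 2 = ∑ l, ∑ i, ⟪v i, (b l : E)⟫ ^ 2 := by
        simp_rw [parseval, real_inner_comm (v _)]
        exact sum_comm
    _ ≤ ∑ _l : Fin (Module.finrank ℝ K), 1 := sum_le_sum fun l _ => bessel l
    _ = Module.finrank ℝ K := by simp

end Submodule

theorem sum_Ico_le_sum_mul_one_sub {a : ℕ → ℝ} (ha : Antitone a) {r q : ℕ} (har : 0 ≤ a r)
    {w : Fin q → ℝ} (hw0 : ∀ k, 0 ≤ w k) (hw1 : ∀ k, w k ≤ 1) (hw : ∑ k, w k ≤ r) :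
    ∑ k ∈ Ico r q, a k ≤ ∑ k : Fin q, a k * (1 - w k) := by
  -- each term is compared with the threshold value `a r`
  have pointwise (k : Fin q) : (if r ≤ (k : ℕ) then a k else 0) +
      a r * ((if (k : ℕ) < r then 1 else 0) - w k) ≤ a k * (1 - w k) := by
    split_ifs with h₁ h₂ h₂
    · omega
    · nlinarith [ha h₁, hw0 k]
    · nlinarith [ha (le_of_not_ge h₁), hw1 k]
    · omega
  have tail : ∑ k : Fin q, (if r ≤ (k : ℕ) then a k else 0) = ∑ k ∈ Ico r q, a k := by
    rw [Fin.sum_univ_eq_sum_range (fun k => if r ≤ k then a k else 0), ← sum_filter]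
    congr 1; ext k; simp only [mem_filter, mem_range, mem_Ico]; omega
  have head : ∑ k : Fin q, (if (k : ℕ) < r then (1 : ℝ) else 0) = min q r := by
    rw [Fin.sum_univ_eq_sum_range (fun k => if k < r then (1 : ℝ) else 0), ← sum_filter,
      show (range q).filter (· < r) = range (min q r) by
        ext k; simp only [mem_filter, mem_range]; omega]
    simp
  have hwq : ∑ k, w k ≤ q := by simpa using sum_le_sum fun k (_ : k ∈ univ) => hw1 k
  have hwmin : ∑ k, w k ≤ (min q r : ℕ) := by
    rw [Nat.cast_min]
    exact le_min hwq hw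
  calc ∑ k ∈ Ico r q, a k
      ≤ ∑ k ∈ Ico r q, a k + a r * ((min q r : ℕ) - ∑ k, w k) :=
        le_add_of_nonneg_right (mul_nonneg har (sub_nonneg.2 hwmin))
    _ = ∑ k : Fin q, ((if r ≤ (k : ℕ) then a k else 0) +
          a r * ((if (k : ℕ) < r then 1 else 0) - w k)) := by
        rw [sum_add_distrib, tail, ← mul_sum, sum_sub_distrib, head]
    _ ≤ ∑ k : Fin q, a k * (1 - w k) := sum_le_sum fun k _ => pointwise k

theorem sum_Ico_sq_le_sum_norm_smul_sub_sq {E : Type*} [NormedAddCommGroup E]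
    [InnerProductSpace ℝ E] (W : Submodule ℝ E) [FiniteDimensional ℝ W] {r q : ℕ}
    (hW : Module.finrank ℝ W ≤ r) {σ : ℕ → ℝ} (hσ : Antitone σ) (hσ0 : ∀ k, 0 ≤ σ k)
    {e : Fin q → E} (he : Orthonormal ℝ e) {x : Fin q → E} (hx : ∀ k, x k ∈ W) :
    ∑ k ∈ Ico r q, σ k ^ 2 ≤ ∑ k : Fin q, ‖σ k • e k - x k‖ ^ 2 := by
  have hσsq : Antitone fun k => σ k ^ 2 := fun k l hkl => by
    simpa using pow_le_pow_left₀ (hσ0 l) (hσ hkl) 2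
  have hw1 (k) : ‖W.starProjection (e k)‖ ^ 2 ≤ 1 := by
    simpa [he.1 k] using
      pow_le_pow_left₀ (norm_nonneg _) (W.norm_starProjection_apply_le (e k)) 2
  have hw : ∑ k, ‖W.starProjection (e k)‖ ^ 2 ≤ r :=
    (W.sum_norm_starProjection_sq_le_finrank he).trans (mod_cast hW)
  calc ∑ k ∈ Ico r q, σ k ^ 2
      ≤ ∑ k : Fin q, σ k ^ 2 * (1 - ‖W.starProjection (e k)‖ ^ 2) :=
        sum_Ico_le_sum_mul_one_sub hσsq (sq_nonneg _) (fun _ => sq_nonneg _) hw1 hw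
    _ = ∑ k : Fin q, (‖σ k • e k‖ ^ 2 - ‖W.starProjection (σ k • e k)‖ ^ 2) := by
        refine sum_congr rfl fun k _ => ?_
        rw [map_smul, norm_smul, norm_smul, he.1 k, mul_pow, mul_pow, Real.norm_eq_abs, sq_abs]
        ring
    _ ≤ ∑ k : Fin q, ‖σ k • e k - x k‖ ^ 2 :=
        sum_le_sum fun k _ => W.norm_sq_sub_norm_starProjection_sq_le _ (hx k)

namespace Matrix

theorem trace_transpose_mul_self {m n R : Type*} [Fintype m] [Fintype n] [CommSemiring R]
    (A : Matrix m n R) : trace (Aᵀ * A) = ∑ j, ∑ i, A i j ^ 2 := by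
  simp [trace, mul_apply, sq]

theorem trace_transpose_mul_self_conj {m n m' n' R : Type*} [Fintype m] [Fintype n]
    [Fintype m'] [Fintype n'] [DecidableEq m] [DecidableEq n] [CommSemiring R]
    {U : Matrix m' m R} {V : Matrix n' n R} (hU : Uᵀ * U = 1) (hV : Vᵀ * V = 1)
    (A : Matrix m n R) : trace ((U * A * Vᵀ)ᵀ * (U * A * Vᵀ)) = trace (Aᵀ * A) := by
  calc trace ((U * A * Vᵀ)ᵀ * (U * A * Vᵀ)) = trace (V * (Aᵀ * A) * Vᵀ) := by
        simp only [transpose_mul, transpose_transpose, Matrix.mul_assoc]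
        rw [← Matrix.mul_assoc Uᵀ, hU, Matrix.one_mul]
    _ = trace (Aᵀ * A) := by
        rw [trace_mul_comm, ← Matrix.mul_assoc, hV, Matrix.one_mul]

theorem trace_transpose_mul_self_of_eq_diag {R : Type*} [CommSemiring R] {n m : ℕ}
    {d : ℕ → R} {D : Matrix (Fin n) (Fin m) R}
    (hD : ∀ i j, D i j = if (i : ℕ) = (j : ℕ) then d i else 0) :
    trace (Dᵀ * D) = ∑ k ∈ range (min n m), d k ^ 2 := by
  have hcol (j : Fin m) : ∑ i : Fin n, D i j ^ 2 = if (j : ℕ) < n then d j ^ 2 else 0 := by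
    simp_rw [hD, ite_pow, zero_pow two_ne_zero]
    rw [Fin.sum_univ_eq_sum_range (fun k => if k = (j : ℕ) then d k ^ 2 else 0), sum_ite_eq']
    simp only [mem_range]
  rw [trace_transpose_mul_self, sum_congr rfl fun j _ => hcol j,
    Fin.sum_univ_eq_sum_range (fun k => if k < n then d k ^ 2 else 0), ← sum_filter]
  congr 1; ext k; simp only [mem_filter, mem_range]; omega

theorem rank_eq_finrank_range_toLpLin {m n : Type*} [Fintype m] [Fintype n] [DecidableEq n]
    (A : Matrix m n ℝ) : A.rank = Module.finrank ℝ (LinearMap.range (toLpLin 2 2 A)) := by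
  rw [toLpLin_eq_toLin]
  exact rank_eq_finrank_range_toLin _ _ _

theorem sum_Ico_sq_le_trace_of_rank_le {n m r : ℕ} {σ : ℕ → ℝ} (hσ : Antitone σ)
    (hσ0 : ∀ k, 0 ≤ σ k) {S : Matrix (Fin n) (Fin m) ℝ}
    (hS : ∀ i j, S i j = if (i : ℕ) = (j : ℕ) then σ i else 0)
    {C : Matrix (Fin n) (Fin m) ℝ} (hC : C.rank ≤ r) :
    ∑ k ∈ Ico r (min n m), σ k ^ 2 ≤ trace ((S - C)ᵀ * (S - C)) := by
  set ι := Fin.castLEEmb (min_le_left n m)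
  set κ := Fin.castLEEmb (min_le_right n m)
  have he : Orthonormal ℝ fun k => EuclideanSpace.single (ι k) (1 : ℝ) :=
    EuclideanSpace.orthonormal_single.comp _ ι.injective
  have hcol (k : Fin (min n m)) : ‖σ k • EuclideanSpace.single (ι k) (1 : ℝ) -
      toLpLin 2 2 C (EuclideanSpace.single (κ k) 1)‖ ^ 2 = ∑ i, (S - C) i (κ k) ^ 2 := by
    rw [EuclideanSpace.real_norm_sq_eq]
    refine sum_congr rfl fun i _ => ?_
    simp +contextual [hS, toLpLin_apply, ι, κ, Fin.ext_iff]
  calc ∑ k ∈ Ico r (min n m), σ k ^ 2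
      ≤ ∑ k : Fin (min n m), ‖σ k • EuclideanSpace.single (ι k) (1 : ℝ)
          - toLpLin 2 2 C (EuclideanSpace.single (κ k) 1)‖ ^ 2 :=
        sum_Ico_sq_le_sum_norm_smul_sub_sq _ (C.rank_eq_finrank_range_toLpLin ▸ hC) hσ hσ0 he
          fun k => LinearMap.mem_range_self _ _
    _ = ∑ j ∈ univ.map κ, ∑ i, (S - C) i j ^ 2 := by
        rw [sum_map]
        exact sum_congr rfl fun k _ => hcol k
    _ ≤ ∑ j, ∑ i, (S - C) i j ^ 2 :=
        sum_le_univ_sum_of_nonneg fun j => sum_nonneg fun i _ => sq_nonneg _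
    _ = trace ((S - C)ᵀ * (S - C)) := (trace_transpose_mul_self _).symm

end Matrix

theorem eckart_young_frobenius_general (n m r : ℕ) (G : Matrix (Fin n) (Fin m) ℝ)
    (U : Matrix (Fin n) (Fin n) ℝ) (V : Matrix (Fin m) (Fin m) ℝ) (σ : ℕ → ℝ)
    (hU : Uᵀ * U = 1) (hV : Vᵀ * V = 1)
    (hσ0 : ∀ j, 0 ≤ σ j) (hσmono : ∀ j k, j ≤ k → σ k ≤ σ j)
    (S : Matrix (Fin n) (Fin m) ℝ)
    (hS : ∀ i j, S i j = if (i : ℕ) = (j : ℕ) then σ (i : ℕ) else 0)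
    (hG : G = U * S * Vᵀ)
    (Sr : Matrix (Fin n) (Fin m) ℝ)
    (hSr : ∀ i j, Sr i j = if (i : ℕ) = (j : ℕ) ∧ (i : ℕ) < r then σ (i : ℕ) else 0) :
    (∀ B : Matrix (Fin n) (Fin m) ℝ, B.rank ≤ r →
      Real.sqrt (Matrix.trace ((G - U * Sr * Vᵀ)ᵀ * (G - U * Sr * Vᵀ))) ≤
        Real.sqrt (Matrix.trace ((G - B)ᵀ * (G - B)))) ∧
    Matrix.trace ((G - U * Sr * Vᵀ)ᵀ * (G - U * Sr * Vᵀ)) =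
      ∑ j ∈ Finset.Ico r (min n m), σ j ^ 2 := by
  have h_diag (i j) : (S - Sr) i j =
      if (i : ℕ) = (j : ℕ) then (if r ≤ (i : ℕ) then σ i else 0) else 0 := by
    rw [Matrix.sub_apply, hS, hSr]
    split_ifs <;> first | omega | ring
  have h_trunc : trace ((G - U * Sr * Vᵀ)ᵀ * (G - U * Sr * Vᵀ)) =
      ∑ j ∈ Ico r (min n m), σ j ^ 2 := by
    rw [hG, ← Matrix.sub_mul, ← Matrix.mul_sub, trace_transpose_mul_self_conj hU hV,
      trace_transpose_mul_self_of_eq_diag (d := fun k => if r ≤ k then σ k else 0) h_diag]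
    simp_rw [ite_pow, zero_pow two_ne_zero]
    rw [← sum_filter]
    congr 1; ext k; simp only [mem_filter, mem_range, mem_Ico]; omega
  have h_rotate (B : Matrix (Fin n) (Fin m) ℝ) : G - B = U * (S - Uᵀ * B * V) * Vᵀ := by
    have hB : U * (Uᵀ * B * V) * Vᵀ = B := by
      simp only [← Matrix.mul_assoc, mul_eq_one_comm.mp hU, Matrix.one_mul]
      rw [Matrix.mul_assoc, mul_eq_one_comm.mp hV, Matrix.mul_one]
    rw [Matrix.mul_sub, Matrix.sub_mul, hB, hG]
  refine ⟨fun B hB => Real.sqrt_le_sqrt ?_, h_trunc⟩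
  rw [h_trunc, h_rotate B, trace_transpose_mul_self_conj hU hV]
  exact sum_Ico_sq_le_trace_of_rank_le hσmono hσ0 hS
    ((rank_mul_le_left _ _).trans ((rank_mul_le_right _ _).trans hB))

/-- Eckart–Young–Mirsky theorem in the Frobenius norm: the rank-`r` SVD truncation
`G_r = U Σ_r Vᵀ` is a best rank-`r` approximation of `G`, and the squared error is
the sum of the squares of the discarded singular values. -/
theorem eckart_young_frobenius (n m r : ℕ) (G : Matrix (Fin n) (Fin m) ℝ)
    (U : Matrix (Fin n) (Fin n) ℝ) (V : Matrix (Fin m) (Fin m) ℝ) (σ : ℕ → ℝ)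
    (hU : Uᵀ * U = 1) (hV : Vᵀ * V = 1)
    (hσ0 : ∀ j, 0 ≤ σ j) (hσmono : ∀ j k, j ≤ k → σ k ≤ σ j)
    (hσq : ∀ j, min n m ≤ j → σ j = 0)
    (S : Matrix (Fin n) (Fin m) ℝ)
    (hS : ∀ i j, S i j = if (i : ℕ) = (j : ℕ) then σ (i : ℕ) else 0)
    (hG : G = U * S * Vᵀ)
    (Sr : Matrix (Fin n) (Fin m) ℝ)
    (hSr : ∀ i j, Sr i j = if (i : ℕ) = (j : ℕ) ∧ (i : ℕ) < r then σ (i : ℕ) else 0) :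
    (∀ B : Matrix (Fin n) (Fin m) ℝ, B.rank ≤ r →
      Real.sqrt (Matrix.trace ((G - U * Sr * Vᵀ)ᵀ * (G - U * Sr * Vᵀ))) ≤
        Real.sqrt (Matrix.trace ((G - B)ᵀ * (G - B)))) ∧
    Matrix.trace ((G - U * Sr * Vᵀ)ᵀ * (G - U * Sr * Vᵀ)) =
      ∑ j ∈ Finset.Ico r (min n m), σ j ^ 2 :=
  eckart_young_frobenius_general n m r G U V σ hU hV hσ0 hσmono S hS hG Sr hSr
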